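/- Fix d ≥ 1. Let ρ > 0, θ > 0, h > 0, E′ > 0, and v ∈ ℝ^d with ‖v‖ < 1, and suppose Δ := ρh² − ρθh(2+‖v‖²) + ρθ²(1+E′) > 0. Define δ₁ = ρ(h² + θh‖v‖² + θ²(1+E′)), δ₂ = ρ(h²‖v‖² + θh + θ²(1+E′)‖v‖²), δ₃ = ρ(h² + (2−‖v‖²)θh + θ²(1+E′)). Then the symmetric (d+1)×(d+1) block matrix A₂ = [[Δ(1−‖v‖²) I_d + δ₃ v vᵀ, −δ₁ v], [−δ₁ vᵀ, δ₂]] is positive definite. In particular, the Schur-complement matrix C = Δ(1−‖v‖²) I_d + (δ₃ − δ₁²/δ₂) v vᵀ has eigenvalues Δ(1−‖v‖²) (with multiplicity d−1) and ρθh(1−‖v‖²)²Δ/δ₂, all positive. -/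

import Mathlib

/-!
By the Schur complement with respect to the entry `δ₂ > 0`, `A₂` is positive definite as soon as
`C = a I + b v vᵀ` is, with `a = Δ(1 - ‖v‖²)` and `b = δ₃ - δ₁²/δ₂`. Such a rank-one perturbation
of a multiple of the identity acts as `a` on `v⊥` and as `a + b‖v‖²` on `v`, so it is positive
definite when both are positive. Positivity of `δ₂ = Δ‖v‖² + ρθh(1 + ‖v‖²)²` and the identity
`a + b‖v‖² = ρθh(1 - ‖v‖²)²Δ/δ₂` are polynomial computations.
-/

open Matrix ComplexOrder

namespace Matrix

variable {m n : Type*} [Fintype m] [Fintype n]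

theorem PosDef.fromBlocks_of_posDef_schur {𝕜 : Type*} [RCLike 𝕜] [DecidableEq m] [DecidableEq n]
    (A : Matrix m m 𝕜) (B : Matrix m n 𝕜) {D : Matrix n n 𝕜} (hD : D.PosDef)
    (hS : (A - B * D⁻¹ * Bᴴ).PosDef) : (fromBlocks A B Bᴴ D).PosDef := by
  have := hD.isUnit.invertible
  refine (((PosDef.fromBlocks₂₂ A B hD).2 hS.posSemidef).posDef_iff_isUnit).2 ?_
  rw [isUnit_iff_isUnit_det, det_fromBlocks₂₂, invOf_eq_nonsing_inv]
  exact (isUnit_iff_isUnit_det _).1 hD.isUnit |>.mul ((isUnit_iff_isUnit_det _).1 hS.isUnit)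

theorem mulVec_smul_one_add_smul_vecMulVec [DecidableEq n] (a b : ℝ) (v w : n → ℝ) :
    (a • 1 + b • vecMulVec v v) *ᵥ w = a • w + (b * (v ⬝ᵥ w)) • v := by
  rw [add_mulVec, smul_mulVec, smul_mulVec, one_mulVec, vecMulVec_mulVec, mul_smul,
    op_smul_eq_smul]

theorem posDef_smul_one_add_smul_vecMulVec [DecidableEq n] {a b : ℝ} {v : n → ℝ} (ha : 0 < a)
    (hab : 0 < a + b * (v ⬝ᵥ v)) : (a • 1 + b • vecMulVec v v).PosDef := by
  refine posDef_iff_dotProduct_mulVec.2 ⟨?_, fun x hx => ?_⟩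
  · exact (isHermitian_one.smul (.all a)).add
      ((posSemidef_vecMulVec_self_star v).isHermitian.smul (.all b))
  have hxx : 0 < x ⬝ᵥ x := by simpa using dotProduct_star_self_pos_iff.2 hx
  have hcs : (v ⬝ᵥ x) ^ 2 ≤ (v ⬝ᵥ v) * (x ⬝ᵥ x) := by
    simpa [dotProduct, sq] using Finset.sum_mul_sq_le_sq_mul_sq Finset.univ v x
  rw [star_trivial, mulVec_smul_one_add_smul_vecMulVec, dotProduct_add, dotProduct_smul,
    dotProduct_smul, smul_eq_mul, smul_eq_mul, dotProduct_comm x v]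
  rcases le_or_gt 0 b with hb | hb
  · nlinarith [sq_nonneg (v ⬝ᵥ x)]
  · nlinarith

theorem posDef_fromBlocks_smul_one_add_smul_vecMulVec [DecidableEq n] {a c e d : ℝ}
    {v : n → ℝ} (ha : 0 < a) (hd : 0 < d) (hschur : 0 < a + (c - e ^ 2 / d) * (v ⬝ᵥ v)) :
    (fromBlocks (a • 1 + c • vecMulVec v v) (replicateCol (Fin 1) (e • v))
      (replicateCol (Fin 1) (e • v))ᴴ (diagonal fun _ => d)).PosDef := by
  have hS : a • 1 + c • vecMulVec v v - replicateCol (Fin 1) (e • v) *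
      (diagonal fun _ : Fin 1 => d)⁻¹ * (replicateCol (Fin 1) (e • v))ᴴ =
      a • 1 + (c - e ^ 2 / d) • vecMulVec v v := by
    rw [inv_eq_left_inv (B := diagonal fun _ => d⁻¹) (by simp [hd.ne'])]
    ext i j
    simp only [vecMulVec, smul_of, replicateCol_smul, smul_mul,
      conjTranspose_eq_transpose_of_trivial, transpose_smul, transpose_replicateCol,
      Matrix.mul_smul, sub_apply, add_apply, smul_apply, smul_eq_mul, of_apply, Pi.smul_apply,
      mul_apply, Finset.univ_unique, Fin.default_eq_zero, replicateCol_apply,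
      Finset.sum_singleton, replicateRow_apply, diagonal_apply_eq]
    ring
  have hCpos := posDef_smul_one_add_smul_vecMulVec ha hschur
  rw [← hS] at hCpos
  exact PosDef.fromBlocks_of_posDef_schur _ _ (posDef_diagonal_iff.2 fun _ => hd) hCpos

end Matrix

namespace SyngeEntropy

-- The coefficients of the paper as functions of `s = ‖v‖²`.
variable (ρ θ h E' s : ℝ)

def Δ : ℝ := ρ * h ^ 2 - ρ * θ * h * (2 + s) + ρ * θ ^ 2 * (1 + E')

def δ₁ : ℝ := ρ * (h ^ 2 + θ * h * s + θ ^ 2 * (1 + E'))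

def δ₂ : ℝ := ρ * (h ^ 2 * s + θ * h + θ ^ 2 * (1 + E') * s)

def δ₃ : ℝ := ρ * (h ^ 2 + (2 - s) * θ * h + θ ^ 2 * (1 + E'))

theorem δ₂_eq : δ₂ ρ θ h E' s = Δ ρ θ h E' s * s + ρ * θ * h * (1 + s) ^ 2 := by
  unfold δ₂ Δ; ring

variable {ρ θ h E' s}

theorem δ₂_pos (hρθh : 0 < ρ * θ * h) (hΔ : 0 < Δ ρ θ h E' s) (hs : 0 ≤ s) :
    0 < δ₂ ρ θ h E' s := by
  rw [δ₂_eq]; positivity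

theorem schur_eigenvalue_eq (hδ₂ : δ₂ ρ θ h E' s ≠ 0) :
    Δ ρ θ h E' s * (1 - s) + (δ₃ ρ θ h E' s - δ₁ ρ θ h E' s ^ 2 / δ₂ ρ θ h E' s) * s =
      ρ * θ * h * (1 - s) ^ 2 * Δ ρ θ h E' s / δ₂ ρ θ h E' s := by
  field_simp
  unfold Δ δ₁ δ₂ δ₃
  ring

end SyngeEntropy

theorem stmt5 (d : ℕ) (ρ θ h E' : ℝ) (v : Fin d → ℝ)
    (hρ : 0 < ρ) (hθ : 0 < θ) (hh : 0 < h)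
    (hv : ∑ j, v j ^ 2 < 1)
    (hΔ : 0 < ρ * h ^ 2 - ρ * θ * h * (2 + ∑ j, v j ^ 2) + ρ * θ ^ 2 * (1 + E')) :
    let s : ℝ := ∑ j, v j ^ 2
    let Δ : ℝ := ρ * h ^ 2 - ρ * θ * h * (2 + s) + ρ * θ ^ 2 * (1 + E')
    let δ₁ : ℝ := ρ * (h ^ 2 + θ * h * s + θ ^ 2 * (1 + E'))
    let δ₂ : ℝ := ρ * (h ^ 2 * s + θ * h + θ ^ 2 * (1 + E') * s)
    let δ₃ : ℝ := ρ * (h ^ 2 + (2 - s) * θ * h + θ ^ 2 * (1 + E'))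
    let A₂ : Matrix (Fin d ⊕ Fin 1) (Fin d ⊕ Fin 1) ℝ :=
      Matrix.of fun k l =>
        match k, l with
        | Sum.inl i, Sum.inl j => Δ * (1 - s) * (if i = j then 1 else 0) + δ₃ * v i * v j
        | Sum.inl i, Sum.inr _ => -(δ₁ * v i)
        | Sum.inr _, Sum.inl j => -(δ₁ * v j)
        | Sum.inr _, Sum.inr _ => δ₂
    let C : Matrix (Fin d) (Fin d) ℝ :=
      Matrix.of fun i j =>
        Δ * (1 - s) * (if i = j then 1 else 0) + (δ₃ - δ₁ ^ 2 / δ₂) * v i * v j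
    A₂.PosDef ∧
      C *ᵥ v = (ρ * θ * h * (1 - s) ^ 2 * Δ / δ₂) • v ∧
      (∀ w : Fin d → ℝ, w ⬝ᵥ v = 0 → C *ᵥ w = (Δ * (1 - s)) • w) ∧
      0 < Δ * (1 - s) ∧ 0 < ρ * θ * h * (1 - s) ^ 2 * Δ / δ₂ := by
  intro s Δ δ₁ δ₂ δ₃ A₂ C
  have hs : 0 ≤ s := Finset.sum_nonneg fun j _ => sq_nonneg (v j)
  have hvv : v ⬝ᵥ v = s := by simp only [dotProduct, s, sq]
  have hδ₂ : 0 < δ₂ := SyngeEntropy.δ₂_pos (by positivity) hΔ hs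
  have hμ₁ : 0 < Δ * (1 - s) := mul_pos hΔ (sub_pos.2 hv)
  have hμ₂ : 0 < ρ * θ * h * (1 - s) ^ 2 * Δ / δ₂ :=
    div_pos (mul_pos (mul_pos (by positivity) (pow_pos (sub_pos.2 hv) 2)) hΔ) hδ₂
  have hev : Δ * (1 - s) + (δ₃ - δ₁ ^ 2 / δ₂) * (v ⬝ᵥ v) = ρ * θ * h * (1 - s) ^ 2 * Δ / δ₂ := by
    rw [hvv]; exact SyngeEntropy.schur_eigenvalue_eq hδ₂.ne'
  have hC : C = (Δ * (1 - s)) • 1 + (δ₃ - δ₁ ^ 2 / δ₂) • vecMulVec v v := by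
    ext i j
    simp [C, one_apply, vecMulVec, mul_assoc]
  have hA₂ : A₂ = fromBlocks ((Δ * (1 - s)) • 1 + δ₃ • vecMulVec v v)
      (replicateCol (Fin 1) (-δ₁ • v)) (replicateCol (Fin 1) (-δ₁ • v))ᴴ
      (diagonal fun _ => δ₂) := by
    ext (i | i) (j | j) <;> simp [A₂, one_apply, vecMulVec, mul_assoc, Fin.fin_one_eq_zero]
  refine ⟨?_, ?_, fun w hw => ?_, hμ₁, hμ₂⟩
  · rw [hA₂]
    exact posDef_fromBlocks_smul_one_add_smul_vecMulVec hμ₁ hδ₂ (by rwa [neg_sq, hev])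
  · rw [hC, mulVec_smul_one_add_smul_vecMulVec, ← hev, add_smul, mul_comm]
  · rw [hC, mulVec_smul_one_add_smul_vecMulVec, dotProduct_comm, hw, mul_zero, zero_smul,
      add_zero]
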